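/- arXiv:math/0409417 — 2 statements merged into one kernel-verified Lean document; each statement's English description precedes it below -/
import Mathlib

section
/- If (A ⊆ B) is an object of S(Λ) whose endomorphism ring (as a Λ-algebra of submodule-preserving endomorphisms of B) is isomorphic to a product K × K of fields, then t·B = 0, i.e. the radical of Λ annihilates B. -/
/-- The endomorphism ring of an object `(A ⊆ B)` of the submodule category `S(Λ)`:
the subring of `End_Λ(B)` of those endomorphisms preserving `A`. -/
def pairEnd (Λ : Type) [CommRing Λ] (B : Type) [AddCommGroup B] [Module Λ B]
    (A : Submodule Λ B) : Subring (Module.End Λ B) where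
  carrier := {f | ∀ a ∈ A, f a ∈ A}
  zero_mem' := by intro a ha; simpa using A.zero_mem
  one_mem' := by intro a ha; simpa using ha
  add_mem' := by
    intro f g hf hg a ha
    simpa [LinearMap.add_apply] using A.add_mem (hf a ha) (hg a ha)
  neg_mem' := by
    intro f hf a ha
    simpa [LinearMap.neg_apply] using A.neg_mem (hf a ha)
  mul_mem' := by
    intro f g hf hg a ha
    simpa [Module.End.mul_apply] using hf _ (hg a ha)

/-- If the endomorphism ring of an object `(A ⊆ B)` of `S(Λ)` is isomorphic to a
product `K × K` of fields, then `t · B = 0`, i.e. the radical of `Λ` annihilates `B`. -/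
theorem radical_annihilates_of_pairEnd_iso_field_prod
    (Λ : Type) [CommRing Λ] [IsLocalRing Λ] (t : Λ) (n : ℕ)
    (hmax : IsLocalRing.maximalIdeal Λ = Ideal.span {t})
    (htn : t ^ n = 0) (htn1 : t ^ (n - 1) ≠ 0)
    (B : Type) [AddCommGroup B] [Module Λ B] [Module.Finite Λ B]
    (A : Submodule Λ B)
    (K : Type) [Field K]
    (h : Nonempty (pairEnd Λ B A ≃+* K × K)) :
    ∀ b : B, t • b = 0 := by
  intro b
  obtain ⟨e⟩ := h
  set f : Module.End Λ B := algebraMap Λ (Module.End Λ B) t with hf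
  have hfA : f ∈ pairEnd Λ B A := by
    intro a ha
    simpa [hf, Module.algebraMap_end_apply] using A.smul_mem t ha
  set x : pairEnd Λ B A := ⟨f, hfA⟩ with hx
  have hnil : IsNilpotent x := by
    refine ⟨n, Subtype.ext ?_⟩
    show f ^ n = 0
    rw [hf, ← map_pow, htn, map_zero]
  have : IsNilpotent (e x) := hnil.map e
  have hx0 : x = 0 := e.injective (by simpa using this.eq_zero)
  have : f b = 0 := by
    have := congrArg Subtype.val hx0
    simp only [ZeroMemClass.coe_zero] at this
    rw [show f = 0 from this]; rfl
  simpa [hf, Module.algebraMap_end_apply] using this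
end

section
/- There is no object (A ⊆ B) in S(Λ) whose endomorphism ring is isomorphic to K × K for a field K; consequently the category S(Λ) admits no full additive embedding of mod K⟨X,Y⟩ (i.e., S(Λ) is not strictly K-wild) for any field K. -/
open CategoryTheory

/-- An object of the submodule category `S(Λ)`: a finitely generated `Λ`-module
together with a distinguished submodule. -/
structure SObj (Λ : Type) [CommRing Λ] : Type 1 where
  carrier : Type
  [isAddCommGroup : AddCommGroup carrier]
  [isModule : Module Λ carrier]
  fin : Module.Finite Λ carrier
  sub : Submodule Λ carrier

attribute [instance] SObj.isAddCommGroup SObj.isModule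

/-- Morphisms in `S(Λ)`: `Λ`-linear maps on the ambient modules preserving the
distinguished submodules; they form an additive group. -/
def SHom {Λ : Type} [CommRing Λ] (M N : SObj Λ) :
    AddSubgroup (M.carrier →ₗ[Λ] N.carrier) where
  carrier := {f | ∀ a ∈ M.sub, f a ∈ N.sub}
  zero_mem' := by intro a ha; simpa using N.sub.zero_mem
  add_mem' := by
    intro f g hf hg a ha
    simpa [LinearMap.add_apply] using N.sub.add_mem (hf a ha) (hg a ha)
  neg_mem' := by
    intro f hf a ha
    simpa [LinearMap.neg_apply] using N.sub.neg_mem (hf a ha)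

/-- The submodule category `S(Λ)`. -/
instance SCat (Λ : Type) [CommRing Λ] : Category (SObj Λ) where
  Hom M N := ↥(SHom M N)
  id M := ⟨LinearMap.id, fun _ ha => ha⟩
  comp f g := ⟨g.1 ∘ₗ f.1, fun a ha => g.2 _ (f.2 a ha)⟩
  id_comp f := Subtype.ext (LinearMap.comp_id _)
  comp_id f := Subtype.ext (LinearMap.id_comp _)
  assoc f g h := Subtype.ext rfl

instance (Λ : Type) [CommRing Λ] : Preadditive (SObj Λ) where
  homGroup M N := inferInstanceAs (AddCommGroup ↥(SHom M N))
  add_comp M N P f g h := Subtype.ext (LinearMap.comp_add _ _ _)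
  comp_add M N P f g h := Subtype.ext (LinearMap.add_comp _ _ _)

/-- An object of the category `mod K⟨X,Y⟩` of finite-dimensional `K⟨X,Y⟩`-modules:
a finite-dimensional `K`-vector space with two endomorphisms `X`, `Y`. -/
structure KXYObj (K : Type) [Field K] : Type 1 where
  V : Type
  [isAddCommGroup : AddCommGroup V]
  [isModule : Module K V]
  fd : FiniteDimensional K V
  X : V →ₗ[K] V
  Y : V →ₗ[K] V

attribute [instance] KXYObj.isAddCommGroup KXYObj.isModule

/-- Morphisms of `K⟨X,Y⟩`-modules: `K`-linear maps intertwining the two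
endomorphisms; they form an additive group. -/
def KXYHom {K : Type} [Field K] (M N : KXYObj K) : AddSubgroup (M.V →ₗ[K] N.V) where
  carrier := {f | f ∘ₗ M.X = N.X ∘ₗ f ∧ f ∘ₗ M.Y = N.Y ∘ₗ f}
  zero_mem' := by constructor <;> ext v <;> simp
  add_mem' := by
    rintro f g ⟨hf1, hf2⟩ ⟨hg1, hg2⟩
    constructor
    · rw [LinearMap.add_comp, LinearMap.comp_add, hf1, hg1]
    · rw [LinearMap.add_comp, LinearMap.comp_add, hf2, hg2]
  neg_mem' := by
    rintro f ⟨hf1, hf2⟩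
    constructor
    · rw [LinearMap.neg_comp, LinearMap.comp_neg, hf1]
    · rw [LinearMap.neg_comp, LinearMap.comp_neg, hf2]

/-- The category `mod K⟨X,Y⟩`. -/
instance KXYCat (K : Type) [Field K] : Category (KXYObj K) where
  Hom M N := ↥(KXYHom M N)
  id M := ⟨LinearMap.id, by constructor <;> ext v <;> simp⟩
  comp f g := ⟨g.1 ∘ₗ f.1, by
    have hf1 := f.2.1
    have hf2 := f.2.2
    have hg1 := g.2.1
    have hg2 := g.2.2
    constructor
    · rw [LinearMap.comp_assoc, hf1, ← LinearMap.comp_assoc, hg1, LinearMap.comp_assoc]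
    · rw [LinearMap.comp_assoc, hf2, ← LinearMap.comp_assoc, hg2, LinearMap.comp_assoc]⟩
  id_comp f := Subtype.ext (LinearMap.comp_id _)
  comp_id f := Subtype.ext (LinearMap.id_comp _)
  assoc f g h := Subtype.ext rfl

instance (K : Type) [Field K] : Preadditive (KXYObj K) where
  homGroup M N := inferInstanceAs (AddCommGroup ↥(KXYHom M N))
  add_comp M N P f g h := Subtype.ext (LinearMap.comp_add _ _ _)
  comp_add M N P f g h := Subtype.ext (LinearMap.add_comp _ _ _)

/-!
A nontrivial central idempotent `e` of `End(A ⊆ B)` would split `B = eB ⊕ (1 - e)B` compatibly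
with `A`. Since `t` is nilpotent and `Λ ⧸ (t)` is a field, every nonzero module maps onto the
residue field, and hence onto `Λ s` for any socle element `s` (`t s = 0`). Taking `s` in
`A ∩ (1 - e)B`, or in `eB` when that intersection is zero, gives a nonzero pair endomorphism `f`
with `f e = f` and `e f = 0` (or the same with `1 - e`), contradicting centrality. So `End(A ⊆ B)`
has only trivial central idempotents, unlike `K × K`, and unlike `End(M ⊕ M')`, whose central
idempotents a full additive embedding would carry into `S(Λ)`.
-/
def HasOnlyTrivialCentralIdempotents (R : Type*) [Ring R] : Prop :=
  ∀ e ∈ Subring.center R, IsIdempotentElem e → e = 0 ∨ e = 1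

section CentralIdempotents

variable {R S T : Type*} [Ring R] [Ring S] [Ring T]

theorem HasOnlyTrivialCentralIdempotents.of_ringEquiv (φ : R ≃+* S)
    (h : HasOnlyTrivialCentralIdempotents S) : HasOnlyTrivialCentralIdempotents R := by
  intro e he hidem
  have hcenter : φ e ∈ Subring.center S := by
    rw [Subring.mem_center_iff] at he ⊢
    intro g
    rw [← φ.apply_symm_apply g, ← map_mul, ← map_mul, he]
  refine (h (φ e) hcenter (hidem.map φ)).imp (fun h0 => ?_) (fun h1 => ?_)
  · exact φ.injective (h0.trans (map_zero φ).symm)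
  · exact φ.injective (h1.trans (map_one φ).symm)

theorem not_hasOnlyTrivialCentralIdempotents_prod [Nontrivial S] [Nontrivial T] :
    ¬ HasOnlyTrivialCentralIdempotents (S × T) := by
  intro h
  have hcenter : ((1, 0) : S × T) ∈ Subring.center (S × T) :=
    Subring.mem_center_iff.mpr fun g => Prod.ext (by simp) (by simp)
  rcases h (1, 0) hcenter (Prod.ext (mul_one _) (mul_zero _)) with h0 | h1
  · exact one_ne_zero (congrArg Prod.fst h0)
  · exact zero_ne_one (congrArg Prod.snd h1)

end CentralIdempotents

theorem Submodule.exists_mem_ne_zero_smul_eq_zero {R M : Type*} [Semiring R] [AddCommMonoid M]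
    [Module R M] {t : R} (ht : IsNilpotent t) {P : Submodule R M} (hP : P ≠ ⊥) :
    ∃ s ∈ P, s ≠ 0 ∧ t • s = 0 := by
  obtain ⟨x, hxP, hx0⟩ := P.ne_bot_iff.mp hP
  obtain ⟨n, hn⟩ := ht
  by_contra! h
  have hpow : ∀ k : ℕ, t ^ k • x ≠ 0 := by
    intro k
    induction k with
    | zero => simpa using hx0
    | succ k ih => rw [pow_succ', mul_smul]; exact h _ (P.smul_mem _ hxP) ih
  exact hpow n (by rw [hn, zero_smul])

section NilpotentPrincipalMaximal

variable {Λ : Type*} [CommRing Λ] {t : Λ} {M N : Type*} [AddCommGroup M] [Module Λ M]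
  [AddCommGroup N] [Module Λ N]

theorem span_singleton_smul_top_ne_top [Nontrivial M] (ht : IsNilpotent t) :
    Ideal.span {t} • (⊤ : Submodule Λ M) ≠ ⊤ := by
  obtain ⟨n, hn⟩ := ht
  intro h
  have hpow : ∀ k : ℕ, Ideal.span {t} ^ k • (⊤ : Submodule Λ M) = ⊤ := by
    intro k
    induction k with
    | zero => simp
    | succ k ih => rw [pow_succ, Submodule.mul_smul, h, ih]
  have := hpow n
  rw [Ideal.span_singleton_pow, hn, Ideal.span_singleton_eq_bot.mpr rfl,
    Submodule.bot_smul] at this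
  exact bot_ne_top this

/-- The map is `M ↠ M ⧸ t M ↠ Λ ⧸ (t) ≅ Λ ∙ s`; `M ⧸ t M ≠ 0` because `t` is nilpotent. -/
theorem exists_linearMap_range_eq_span_singleton [Nontrivial M] (ht : IsNilpotent t)
    (hmax : (Ideal.span {t}).IsMaximal) {s : N} (hs : t • s = 0) :
    ∃ g : M →ₗ[Λ] N, LinearMap.range g = Λ ∙ s := by
  set I := Ideal.span {t}
  set P : Submodule Λ M := I • ⊤
  let _ : Field (Λ ⧸ I) := Ideal.Quotient.field I
  obtain ⟨b, -, hb⟩ := SetLike.exists_of_lt (span_singleton_smul_top_ne_top (M := M) ht).lt_top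
  obtain ⟨φ, hφ⟩ := Module.Projective.exists_dual_eq_one (Λ ⧸ I)
    (x := Submodule.Quotient.mk (p := P) b) (by rwa [Ne, Submodule.Quotient.mk_eq_zero])
  have hφ_surj : LinearMap.range (φ.restrictScalars Λ) = ⊤ :=
    LinearMap.range_eq_top.mpr fun c => ⟨c • Submodule.Quotient.mk (p := P) b, by simp [hφ]⟩
  have hker : I ≤ LinearMap.ker (LinearMap.toSpanSingleton Λ N s) := by
    rw [Ideal.span_le]
    simpa using hs
  refine ⟨(I.liftQ _ hker ∘ₗ φ.restrictScalars Λ) ∘ₗ P.mkQ, ?_⟩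
  rw [LinearMap.range_comp_of_range_eq_top _ (Submodule.range_mkQ _),
    LinearMap.range_comp_of_range_eq_top _ hφ_surj, Submodule.range_liftQ,
    LinearMap.range_toSpanSingleton]

theorem exists_mul_eq_self_range_eq_span_singleton (ht : IsNilpotent t)
    (hmax : (Ideal.span {t}).IsMaximal) {p : Module.End Λ M} (hp : IsIdempotentElem p)
    (hp0 : p ≠ 0) {s : M} (hs : t • s = 0) :
    ∃ f : Module.End Λ M, f * p = f ∧ LinearMap.range f = Λ ∙ s := by
  have := Submodule.nontrivial_iff_ne_bot.mpr (LinearMap.range_eq_bot.not.mpr hp0)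
  obtain ⟨g, hg⟩ := exists_linearMap_range_eq_span_singleton (M := LinearMap.range p) ht hmax hs
  refine ⟨g ∘ₗ p.rangeRestrict, LinearMap.ext fun x => ?_, ?_⟩
  · exact congrArg g (Subtype.ext (LinearMap.congr_fun hp x))
  · rw [LinearMap.range_comp_of_range_eq_top _ p.range_rangeRestrict, hg]

end NilpotentPrincipalMaximal

section PairEnd

variable {Λ : Type} [CommRing Λ] {t : Λ} {B : Type} [AddCommGroup B] [Module Λ B]
  {A : Submodule Λ B}

theorem pairEnd.eq_zero_of_apply_eq_zero_of_smul_eq_zero (ht : IsNilpotent t)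
    (hmax : (Ideal.span {t}).IsMaximal) {e : pairEnd Λ B A}
    (hcenter : e ∈ Subring.center (pairEnd Λ B A)) (hidem : IsIdempotentElem e) (he0 : e ≠ 0)
    {s : B} (hes : (e : Module.End Λ B) s = 0) (hts : t • s = 0)
    (hA : s ∈ A ∨ A ⊓ LinearMap.range (e : Module.End Λ B) = ⊥) : s = 0 := by
  obtain ⟨f, hfe, hfs⟩ := exists_mul_eq_self_range_eq_span_singleton ht hmax
    (congrArg Subtype.val hidem) (fun h => he0 (Subtype.ext h)) hts
  have hf_span : ∀ x, f x ∈ Λ ∙ s := fun x => hfs ▸ LinearMap.mem_range_self f x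
  have hfA : f ∈ pairEnd Λ B A := by
    intro a ha
    rcases hA with hsA | hAe
    · exact (Submodule.span_singleton_le_iff_mem _ _).mpr hsA (hf_span a)
    · have hea : (e : Module.End Λ B) a = 0 := by
        rw [← Submodule.mem_bot Λ, ← hAe]
        exact ⟨e.2 a ha, LinearMap.mem_range_self _ a⟩
      rw [← hfe, Module.End.mul_apply, hea, map_zero]
      exact A.zero_mem
  have hef : (e : Module.End Λ B) * f = 0 := by
    ext x
    obtain ⟨c, hc⟩ := Submodule.mem_span_singleton.mp (hf_span x)
    simp [← hc, hes]
  have hf0 : f = 0 :=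
    calc f = f * e := hfe.symm
      _ = e * f := congrArg Subtype.val (Subring.mem_center_iff.mp hcenter ⟨f, hfA⟩)
      _ = 0 := hef
  have hs_range : s ∈ LinearMap.range f := hfs ▸ Submodule.mem_span_singleton_self s
  rwa [hf0, LinearMap.range_zero, Submodule.mem_bot] at hs_range

theorem pairEnd_hasOnlyTrivialCentralIdempotents (ht : IsNilpotent t)
    (hmax : (Ideal.span {t}).IsMaximal) (A : Submodule Λ B) :
    HasOnlyTrivialCentralIdempotents (pairEnd Λ B A) := by
  intro e hcenter hidem
  by_contra! he
  obtain ⟨he0, he1⟩ := he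
  have hq_center : 1 - e ∈ Subring.center (pairEnd Λ B A) :=
    Subring.sub_mem _ (Subring.one_mem _) hcenter
  have hq0 : 1 - e ≠ 0 := sub_ne_zero.mpr he1.symm
  have hqe : ∀ y, ((1 - e : pairEnd Λ B A) : Module.End Λ B) ((e : Module.End Λ B) y) = 0 :=
    fun y => LinearMap.congr_fun (congrArg Subtype.val hidem.one_sub_mul_self) y
  have heq : ∀ y, (e : Module.End Λ B) (((1 - e : pairEnd Λ B A) : Module.End Λ B) y) = 0 :=
    fun y => LinearMap.congr_fun (congrArg Subtype.val hidem.mul_one_sub_self) y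
  by_cases hAq : A ⊓ LinearMap.range ((1 - e : pairEnd Λ B A) : Module.End Λ B) = ⊥
  · have hrange : LinearMap.range (e : Module.End Λ B) ≠ ⊥ :=
      LinearMap.range_eq_bot.not.mpr fun h => he0 (Subtype.ext h)
    obtain ⟨s, ⟨y, rfl⟩, hs0, hts⟩ := Submodule.exists_mem_ne_zero_smul_eq_zero ht hrange
    exact hs0 (pairEnd.eq_zero_of_apply_eq_zero_of_smul_eq_zero ht hmax hq_center
      hidem.one_sub hq0 (hqe y) hts (Or.inr hAq))
  · obtain ⟨s, ⟨hsA, y, rfl⟩, hs0, hts⟩ := Submodule.exists_mem_ne_zero_smul_eq_zero ht hAq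
    exact hs0 (pairEnd.eq_zero_of_apply_eq_zero_of_smul_eq_zero ht hmax hcenter hidem he0
      (heq y) hts (Or.inl hsA))

end PairEnd

/-- The sum `M ⊕ M'` of the one-dimensional modules with `X = 1` and with `X = 0` (`Y = 0`
on both). -/
def KXYObj.sumOfSimples (K : Type) [Field K] : KXYObj K where
  V := K × K
  fd := inferInstance
  X := LinearMap.prodMap LinearMap.id 0
  Y := 0

theorem KXYObj.not_hasOnlyTrivialCentralIdempotents_end_sumOfSimples (K : Type) [Field K] :
    ¬ HasOnlyTrivialCentralIdempotents (End (KXYObj.sumOfSimples K)) := by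
  intro h
  let e : End (KXYObj.sumOfSimples K) :=
    ⟨(KXYObj.sumOfSimples K).X, rfl, (LinearMap.comp_zero _).trans (LinearMap.zero_comp _).symm⟩
  have hcenter : e ∈ Subring.center (End (KXYObj.sumOfSimples K)) :=
    Subring.mem_center_iff.mpr fun g => Subtype.ext g.2.1
  have hidem : IsIdempotentElem e := Subtype.ext (LinearMap.ext fun v => rfl)
  rcases h e hcenter hidem with h0 | h1
  · exact one_ne_zero (congrArg (fun f : End (sumOfSimples K) => (f.1 (1, 0) : K × K).1) h0)
  · exact zero_ne_one (congrArg (fun f : End (sumOfSimples K) => (f.1 (0, 1) : K × K).2) h1)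

noncomputable def CategoryTheory.Functor.FullyFaithful.ringEquivEnd {C D : Type*} [Category C]
    [Category D] [Preadditive C] [Preadditive D] {F : C ⥤ D} [F.Additive] (hF : F.FullyFaithful)
    (X : C) :
    End X ≃+* End (F.obj X) :=
  { hF.mulEquivEnd X with map_add' := fun _ _ => F.map_add }

def SObj.endRingEquiv {Λ : Type} [CommRing Λ] (P : SObj Λ) :
    End P ≃+* pairEnd Λ P.carrier P.sub where
  toFun f := ⟨f.1, f.2⟩
  invFun g := ⟨g.1, g.2⟩
  left_inv _ := rfl
  right_inv _ := rfl
  map_mul' _ _ := rfl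
  map_add' _ _ := rfl

theorem S_Lambda_not_strictly_wild_general
    (Λ : Type) [CommRing Λ] [IsLocalRing Λ] (t : Λ) (n : ℕ)
    (hmax : IsLocalRing.maximalIdeal Λ = Ideal.span {t})
    (htn : t ^ n = 0)
    (K : Type) [Field K] :
    (∀ (B : Type) (_ : AddCommGroup B) (_ : Module Λ B) (_ : Module.Finite Λ B)
        (A : Submodule Λ B), ¬ Nonempty (pairEnd Λ B A ≃+* K × K)) ∧
    ¬ ∃ F : KXYObj K ⥤ SObj Λ, F.Full ∧ F.Faithful ∧ F.Additive := by
  have hpair (B : Type) [AddCommGroup B] [Module Λ B] (A : Submodule Λ B) :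
      HasOnlyTrivialCentralIdempotents (pairEnd Λ B A) :=
    pairEnd_hasOnlyTrivialCentralIdempotents ⟨n, htn⟩
      (hmax ▸ IsLocalRing.maximalIdeal.isMaximal Λ) A
  refine ⟨fun B _ _ _ A ⟨φ⟩ => not_hasOnlyTrivialCentralIdempotents_prod
    ((hpair B A).of_ringEquiv φ.symm), ?_⟩
  rintro ⟨F, _, _, _⟩
  let N := KXYObj.sumOfSimples K
  exact KXYObj.not_hasOnlyTrivialCentralIdempotents_end_sumOfSimples K <|
    ((hpair _ _).of_ringEquiv (F.obj N).endRingEquiv).of_ringEquiv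
      ((Functor.FullyFaithful.ofFullyFaithful F).ringEquivEnd N)

/-- There is no object `(A ⊆ B)` of `S(Λ)` whose endomorphism ring is isomorphic to
`K × K` for a field `K`; consequently `S(Λ)` admits no full additive embedding of
`mod K⟨X,Y⟩`, i.e. `S(Λ)` is not strictly `K`-wild, for any field `K`. -/
theorem S_Lambda_not_strictly_wild
    (Λ : Type) [CommRing Λ] [IsLocalRing Λ] (t : Λ) (n : ℕ)
    (hmax : IsLocalRing.maximalIdeal Λ = Ideal.span {t})
    (htn : t ^ n = 0) (htn1 : t ^ (n - 1) ≠ 0)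
    (K : Type) [Field K] :
    (∀ (B : Type) (_ : AddCommGroup B) (_ : Module Λ B) (_ : Module.Finite Λ B)
        (A : Submodule Λ B), ¬ Nonempty (pairEnd Λ B A ≃+* K × K)) ∧
    ¬ ∃ F : KXYObj K ⥤ SObj Λ, F.Full ∧ F.Faithful ∧ F.Additive :=
  S_Lambda_not_strictly_wild_general Λ t n hmax htn K
end
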